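/- Threshold characterization of the constrained firm problem: Fix a game (X, λ_w, p, G, v_q, v_u, ω), a group i, and a cost threshold c̄(i), and let (μ_RE(i,·), f_RE(i,·)) be the corresponding true within-group distribution and conditional probability. Fix t ∈ [0,1] and consider the linear program of maximizing Σ_{x∈X} d_x·μ_RE(i,x)[f_RE(i,x)v_q − (1−f_RE(i,x))v_u] over {d_x}_{x∈X} ∈ [0,1]^X subject to Σ_x d_x·μ_RE(i,x)f_RE(i,x) = t·Σ_x μ_RE(i,x)f_RE(i,x). If the feasible set is nonempty, then every maximizer d̂ has threshold form in the likelihood: there exists a likelihood value l_m (m ∈ {1,…,n}) such that d̂_x = 0 whenever l(x) < l_m and d̂_x = 1 whenever l(x) > l_m. -/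

import Mathlib

/-!
Formalization of the Coate–Loury statistical discrimination model with
machine-learning (contractible) beliefs, following Zhu,
"The Impact of Equal Opportunity on Statistical Discrimination".
-/

open scoped BigOperators
open MeasureTheory

noncomputable section

attribute [local instance] Classical.propDecidable

/-- Group identities `I = {w, b}`. -/
inductive GrpI
  | w
  | b
deriving DecidableEq

instance instFintypeGrpI : Fintype GrpI :=
  ⟨{GrpI.w, GrpI.b}, fun x => by cases x <;> simp⟩

/-- Classes `Y = {q, u}` (qualified / unqualified). -/
inductive Cls
  | q
  | u
deriving DecidableEq

instance instFintypeCls : Fintype Cls :=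
  ⟨{Cls.q, Cls.u}, fun x => by cases x <;> simp⟩

/-- A game `(X, λ_w, p, G, v_q, v_u, ω)` of the Coate–Loury model.  The set of
other features is the finite product `X = X_1 × ⋯ × X_N`, encoded as the pi type
`(j : Fin N) → Xs j`.  The statistical model (Assumption 1) is encoded through a
nonempty subset `Ysub ⊆ {1, …, N}` together with the factorization
`p(x | i, y) = pY(x_𝒴 | y) · pC(x_{-𝒴} | i, x_𝒴)`.  The cost distribution is
given by an everywhere positive density `g` with `∫ g = 1` and `∫ |c| g(c) dc < ∞`. -/
structure Game (N : ℕ) (Xs : Fin N → Type) [∀ j, Fintype (Xs j)]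
    [∀ j, Nonempty (Xs j)] where
  lamw : ℝ
  lamw_pos : 0 < lamw
  lamw_lt_one : lamw < 1
  Ysub : Finset (Fin N)
  Ysub_nonempty : Ysub.Nonempty
  pY : ((j : Ysub) → Xs j.1) → Cls → ℝ
  pC : GrpI → ((j : Fin N) → Xs j) → ℝ
  pY_pos : ∀ xY y, 0 < pY xY y
  pC_pos : ∀ i x, 0 < pC i x
  pY_sum : ∀ y, ∑ xY, pY xY y = 1
  pC_sum : ∀ (i : GrpI) (xY : (j : Ysub) → Xs j.1),
    ∑ x ∈ Finset.univ.filter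
        (fun x : (j : Fin N) → Xs j => (fun j : Ysub => x j.1) = xY),
      pC i x = 1
  g : ℝ → ℝ
  g_pos : ∀ c, 0 < g c
  g_int : Integrable g
  g_norm : (∫ c, g c) = 1
  g_abs_int : Integrable fun c => |c| * g c
  vq : ℝ
  vu : ℝ
  om : ℝ
  vq_pos : 0 < vq
  vu_pos : 0 < vu
  om_pos : 0 < om

section Policies

variable {N : ℕ} {Xs : Fin N → Type}

/-- A decision policy `d : I × X → [0,1]`. -/
def IsPolicy (d : GrpI → ((j : Fin N) → Xs j) → ℝ) : Prop :=
  ∀ i x, d i x ∈ Set.Icc (0 : ℝ) 1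

/-- A decision policy when data is color-blind, `d_cb : X → [0,1]`. -/
def IsCbPolicy (dcb : ((j : Fin N) → Xs j) → ℝ) : Prop :=
  ∀ x, dcb x ∈ Set.Icc (0 : ℝ) 1

/-- `S ⊆ {1, …, N}` has the dependence property for the belief `f`:
`f` depends on `(i, x)` only up to `(i, x_S)`. -/
def DepProp {I : Type} (f : I → ((j : Fin N) → Xs j) → ℝ)
    (S : Finset (Fin N)) : Prop :=
  ∀ (i : I) (x x' : (j : Fin N) → Xs j), (∀ j ∈ S, x j = x' j) → f i x = f i x'

/-- The minimal subset `Ŷ(f)` with the dependence property. -/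
def minDep {I : Type} (f : I → ((j : Fin N) → Xs j) → ℝ) : Finset (Fin N) :=
  Finset.univ.filter fun j => ∀ S : Finset (Fin N), DepProp f S → j ∈ S

variable [∀ j, Fintype (Xs j)]

/-- Full-support probability distributions on `I × X` (the set `Δ°(I × X)`). -/
def FullSupp (μ : GrpI → ((j : Fin N) → Xs j) → ℝ) : Prop :=
  (∀ i x, 0 < μ i x) ∧ ∑ i, ∑ x, μ i x = 1

/-- Beliefs valued in `(0, 1)`. -/
def OpenBelief (f : GrpI → ((j : Fin N) → Xs j) → ℝ) : Prop :=
  ∀ i x, f i x ∈ Set.Ioo (0 : ℝ) 1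

/-- Acceptance rate of group `i`. -/
def AR (i : GrpI) (d μ : GrpI → ((j : Fin N) → Xs j) → ℝ) : ℝ :=
  (∑ x, d i x * μ i x) / ∑ x, μ i x

/-- True positive rate of group `i`. -/
def TP (i : GrpI) (d μ f : GrpI → ((j : Fin N) → Xs j) → ℝ) : ℝ :=
  (∑ x, d i x * μ i x * f i x) / ∑ x, μ i x * f i x

/-- The equal opportunity control `k(X, μ, f)`. -/
def EOset (μ f : GrpI → ((j : Fin N) → Xs j) → ℝ) :
    Set (GrpI → ((j : Fin N) → Xs j) → ℝ) :=
  {d | IsPolicy d ∧ TP GrpI.w d μ f = TP GrpI.b d μ f}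

/-- The color-blind control: all color-blind decision policies. -/
def CBset : Set (GrpI → ((j : Fin N) → Xs j) → ℝ) :=
  {d | IsPolicy d ∧ ∀ x, d GrpI.w x = d GrpI.b x}

/-- The no proxies control: policies depending on `(i,x)` only through `x_{Ŷ(f)}`. -/
def NoProxies (_μ f : GrpI → ((j : Fin N) → Xs j) → ℝ) :
    Set (GrpI → ((j : Fin N) → Xs j) → ℝ) :=
  {d | IsPolicy d ∧
    ∀ i i' x x', (∀ j ∈ minDep f, x j = x' j) → d i x = d i' x'}

/-- `ℓ²` distance between decision policies. -/
def polDist (d d' : GrpI → ((j : Fin N) → Xs j) → ℝ) : ℝ :=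
  Real.sqrt (∑ i, ∑ x, (d i x - d' i x) ^ 2)

/-- `ℓ²` distance between pairs `(μ, f)`. -/
def pairDist (μ f μ' f' : GrpI → ((j : Fin N) → Xs j) → ℝ) : ℝ :=
  Real.sqrt ((∑ i, ∑ x, (μ i x - μ' i x) ^ 2) + ∑ i, ∑ x, (f i x - f' i x) ^ 2)

/-- `ℓ²` distance between strategy profiles `(c̄, d)`. -/
def profDist (c : GrpI → ℝ) (d : GrpI → ((j : Fin N) → Xs j) → ℝ)
    (c' : GrpI → ℝ) (d' : GrpI → ((j : Fin N) → Xs j) → ℝ) : ℝ :=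
  Real.sqrt ((∑ i, (c i - c' i) ^ 2) + ∑ i, ∑ x, (d i x - d' i x) ^ 2)

end Policies

/-- Upper hemicontinuity of a correspondence on a set. -/
def UpperHemicontinuousOnCorr {α β : Type*} [TopologicalSpace α] [TopologicalSpace β]
    (F : α → Set β) (S : Set α) : Prop :=
  ∀ a ∈ S, ∀ V : Set β, IsOpen V → F a ⊆ V → ∀ᶠ a' in nhdsWithin a S, F a' ⊆ V

/-- Lower hemicontinuity of a correspondence on a set. -/
def LowerHemicontinuousOnCorr {α β : Type*} [TopologicalSpace α] [TopologicalSpace β]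
    (F : α → Set β) (S : Set α) : Prop :=
  ∀ a ∈ S, ∀ V : Set β, IsOpen V → (F a ∩ V).Nonempty →
    ∀ᶠ a' in nhdsWithin a S, (F a' ∩ V).Nonempty

namespace Game

variable {N : ℕ} {Xs : Fin N → Type} [∀ j, Fintype (Xs j)] [∀ j, Nonempty (Xs j)]
variable (Γ : Game N Xs)

/-- Projection `x ↦ x_𝒴`. -/
def proj (x : (j : Fin N) → Xs j) : (j : Γ.Ysub) → Xs j.1 := fun j => x j.1

/-- `p(x | i, y) = p(x_𝒴 | y) · p(x_{-𝒴} | i, x_𝒴)`. -/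
def p (i : GrpI) (x : (j : Fin N) → Xs j) (y : Cls) : ℝ :=
  Γ.pY (Γ.proj x) y * Γ.pC i x

/-- Group probabilities `λ_w`, `λ_b = 1 - λ_w`. -/
def lam : GrpI → ℝ := fun i =>
  match i with
  | GrpI.w => Γ.lamw
  | GrpI.b => 1 - Γ.lamw

/-- The CDF `G` of the cost distribution. -/
def G (c : ℝ) : ℝ := ∫ t in Set.Iic c, Γ.g t

/-- The likelihood function `l(x) = p(x_𝒴 | q) / p(x_𝒴 | u)`. -/
def lhd (x : (j : Fin N) → Xs j) : ℝ :=
  Γ.pY (Γ.proj x) Cls.q / Γ.pY (Γ.proj x) Cls.u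

/-- The likelihood function on `X_𝒴`. -/
def lhdY (xY : (j : Γ.Ysub) → Xs j.1) : ℝ := Γ.pY xY Cls.q / Γ.pY xY Cls.u

/-- The set of likelihood values `{l_1 < … < l_n}`. -/
def LVset : Set ℝ := Set.range Γ.lhd

/-- The assumption that `1` is not a likelihood value
(equivalently, `WW` is single-peaked). -/
def OneNotLV : Prop := (1 : ℝ) ∉ Γ.LVset

/-- The largest likelihood value `l_n`. -/
def lmax : ℝ := sSup Γ.LVset

/-- `⌈ℓ⌉`: the smallest likelihood value `≥ ℓ`. -/
def lceil (ℓ : ℝ) : ℝ := sInf {v | v ∈ Γ.LVset ∧ ℓ ≤ v}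

/-- `⌈ℓ⌉⁻`: the next smallest likelihood value below `⌈ℓ⌉` (or `l_0 = 0`). -/
def lceilm (ℓ : ℝ) : ℝ := sSup (insert 0 {v | v ∈ Γ.LVset ∧ v < Γ.lceil ℓ})

/-- The smallest likelihood value `> ℓ`. -/
def lnext (ℓ : ℝ) : ℝ := sInf {v | v ∈ Γ.LVset ∧ ℓ < v}

/-- The true distribution of features `μ_RE` given cost thresholds `c̄`. -/
def muRE (c : GrpI → ℝ) (i : GrpI) (x : (j : Fin N) → Xs j) : ℝ :=
  Γ.lam i * (Γ.G (c i) * Γ.p i x Cls.q + (1 - Γ.G (c i)) * Γ.p i x Cls.u)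

/-- The true conditional probability (calibrated belief) `f_RE` given `c̄`. -/
def fRE (c : GrpI → ℝ) (i : GrpI) (x : (j : Fin N) → Xs j) : ℝ :=
  Γ.G (c i) * Γ.p i x Cls.q /
    (Γ.G (c i) * Γ.p i x Cls.q + (1 - Γ.G (c i)) * Γ.p i x Cls.u)

/-- Utility `U_i(c̄(i), d(i))` of the representative `i`-applicant. -/
def Uapp (i : GrpI) (ci : ℝ) (di : ((j : Fin N) → Xs j) → ℝ) : ℝ :=
  Γ.om * ∑ x, (Γ.G ci * Γ.p i x Cls.q + (1 - Γ.G ci) * Γ.p i x Cls.u) * di x -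
    ∫ t in Set.Iic ci, t * Γ.g t

/-- Firm utility `U_F(d, μ, f)`. -/
def UF (d μ f : GrpI → ((j : Fin N) → Xs j) → ℝ) : ℝ :=
  ∑ i, ∑ x, d i x * μ i x * (f i x * Γ.vq - (1 - f i x) * Γ.vu)

/-- The color-blind true distribution of features `μ_cb,RE`. -/
def mucbRE (c : GrpI → ℝ) (x : (j : Fin N) → Xs j) : ℝ :=
  Γ.muRE c GrpI.w x + Γ.muRE c GrpI.b x

/-- The color-blind true conditional probability `f_cb,RE`. -/
def fcbRE (c : GrpI → ℝ) (x : (j : Fin N) → Xs j) : ℝ :=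
  (Γ.muRE c GrpI.w x * Γ.fRE c GrpI.w x + Γ.muRE c GrpI.b x * Γ.fRE c GrpI.b x) /
    Γ.mucbRE c x

/-- Firm utility when data is color-blind. -/
def UFcb (dcb μcb fcb : ((j : Fin N) → Xs j) → ℝ) : ℝ :=
  ∑ x, dcb x * μcb x * (fcb x * Γ.vq - (1 - fcb x) * Γ.vu)

/-- `d(i | l_m)`: conditional acceptance probability at likelihood value `lv`. -/
def dcond (i : GrpI) (di : ((j : Fin N) → Xs j) → ℝ) (lv : ℝ) : ℝ :=
  (∑ x ∈ Finset.univ.filter (fun x => Γ.lhd x = lv), Γ.p i x Cls.q * di x) /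
    ∑ x ∈ Finset.univ.filter (fun x => Γ.lhd x = lv), Γ.p i x Cls.q

/-- The within-group policy `d(i)` is associated with the likelihood mixture `ℓ`. -/
def AssociatedWith (i : GrpI) (di : ((j : Fin N) → Xs j) → ℝ) (ℓ : ℝ) : Prop :=
  0 ≤ ℓ ∧ ℓ ≤ Γ.lmax ∧
    ∀ lv ∈ Γ.LVset,
      (Γ.lceil ℓ < lv → Γ.dcond i di lv = 1) ∧
      (lv = Γ.lceil ℓ →
        Γ.dcond i di lv = (Γ.lceil ℓ - ℓ) / (Γ.lceil ℓ - Γ.lceilm ℓ)) ∧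
      (lv < Γ.lceil ℓ → Γ.dcond i di lv = 0)

/-- A decision policy is fair if both within-group policies are associated with
the same likelihood mixture. -/
def Fair (d : GrpI → ((j : Fin N) → Xs j) → ℝ) : Prop :=
  ∃ ℓ, Γ.AssociatedWith GrpI.w (d GrpI.w) ℓ ∧ Γ.AssociatedWith GrpI.b (d GrpI.b) ℓ

/-- `WW(l_m) = ω ∑_{x_𝒴 : l(x_𝒴) > l_m} (p(x_𝒴|q) - p(x_𝒴|u))`. -/
def WWval (t : ℝ) : ℝ :=
  Γ.om * ∑ xY ∈ Finset.univ.filter (fun xY => t < Γ.lhdY xY),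
    (Γ.pY xY Cls.q - Γ.pY xY Cls.u)

/-- The piecewise-linear function `WW` interpolating the points `(l_m, WW(l_m))`. -/
def WW (ℓ : ℝ) : ℝ :=
  if Γ.lceil ℓ = Γ.lceilm ℓ then Γ.WWval (Γ.lceil ℓ)
  else
    (Γ.WWval (Γ.lceilm ℓ) * (Γ.lceil ℓ - ℓ) +
        Γ.WWval (Γ.lceil ℓ) * (ℓ - Γ.lceilm ℓ)) /
      (Γ.lceil ℓ - Γ.lceilm ℓ)

/-- `EĒ(l_m)`: the unique cost with `G(EĒ(l_m)) = 1 / ((v_q/v_u) l_m + 1)`. -/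
def EEbar (lv : ℝ) : ℝ := sInf {cc | 1 / (Γ.vq / Γ.vu * lv + 1) ≤ Γ.G cc}

/-- The correspondence `EE : [0, l_n] ⇒ ℝ`. -/
def EE (ℓ : ℝ) : Set ℝ :=
  if ℓ = 0 then Set.Ici (Γ.EEbar (Γ.lceil 0))
  else if ℓ = Γ.lmax then Set.Iic (Γ.EEbar Γ.lmax)
  else if ℓ ∈ Γ.LVset then Set.Icc (Γ.EEbar (Γ.lnext ℓ)) (Γ.EEbar ℓ)
  else {Γ.EEbar (Γ.lceil ℓ)}

/-- Each representative applicant's cost threshold is a best response to `d`. -/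
def BestResponds (c : GrpI → ℝ) (d : GrpI → ((j : Fin N) → Xs j) → ℝ) : Prop :=
  ∀ (i : GrpI) (c' : ℝ), Γ.Uapp i c' (d i) ≤ Γ.Uapp i (c i) (d i)

/-- An (un-controlled) equilibrium. -/
def IsEquilibrium (c : GrpI → ℝ) (d : GrpI → ((j : Fin N) → Xs j) → ℝ) : Prop :=
  IsPolicy d ∧ Γ.BestResponds c d ∧
    ∀ d', IsPolicy d' →
      Γ.UF d' (Γ.muRE c) (Γ.fRE c) ≤ Γ.UF d (Γ.muRE c) (Γ.fRE c)

/-- A `k`-controlled equilibrium, for the control `(μ, f) ↦ K μ f`. -/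
def IsControlledEq
    (K : (GrpI → ((j : Fin N) → Xs j) → ℝ) → (GrpI → ((j : Fin N) → Xs j) → ℝ) →
      Set (GrpI → ((j : Fin N) → Xs j) → ℝ))
    (c : GrpI → ℝ) (d : GrpI → ((j : Fin N) → Xs j) → ℝ) : Prop :=
  d ∈ K (Γ.muRE c) (Γ.fRE c) ∧ Γ.BestResponds c d ∧
    ∀ d' ∈ K (Γ.muRE c) (Γ.fRE c),
      Γ.UF d' (Γ.muRE c) (Γ.fRE c) ≤ Γ.UF d (Γ.muRE c) (Γ.fRE c)

/-- `𝒮_k(μ, f)`: firm-optimal policies under the control `K` at `(μ, f)`. -/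
def Smax
    (K : (GrpI → ((j : Fin N) → Xs j) → ℝ) → (GrpI → ((j : Fin N) → Xs j) → ℝ) →
      Set (GrpI → ((j : Fin N) → Xs j) → ℝ))
    (μ f : GrpI → ((j : Fin N) → Xs j) → ℝ) :
    Set (GrpI → ((j : Fin N) → Xs j) → ℝ) :=
  {d | d ∈ K μ f ∧ ∀ d' ∈ K μ f, Γ.UF d' μ f ≤ Γ.UF d μ f}

/-- A `k`-controlled `ε`-equilibrium. -/
def IsCtrlEpsEq
    (K : (GrpI → ((j : Fin N) → Xs j) → ℝ) → (GrpI → ((j : Fin N) → Xs j) → ℝ) →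
      Set (GrpI → ((j : Fin N) → Xs j) → ℝ))
    (ε : ℝ) (c : GrpI → ℝ) (d : GrpI → ((j : Fin N) → Xs j) → ℝ) : Prop :=
  ∃ μ f, FullSupp μ ∧ OpenBelief f ∧
    pairDist μ f (Γ.muRE c) (Γ.fRE c) ≤ ε ∧
    Γ.BestResponds c d ∧ d ∈ K μ f ∧ ∀ d' ∈ K μ f, Γ.UF d' μ f ≤ Γ.UF d μ f

/-- Best responses of applicants to a color-blind policy. -/
def BestRespondsCb (c : GrpI → ℝ) (dcb : ((j : Fin N) → Xs j) → ℝ) : Prop :=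
  ∀ (i : GrpI) (c' : ℝ), Γ.Uapp i c' dcb ≤ Γ.Uapp i (c i) dcb

/-- An equilibrium when data is color-blind (unrestricted control). -/
def IsCbEquilibrium (c : GrpI → ℝ) (dcb : ((j : Fin N) → Xs j) → ℝ) : Prop :=
  IsCbPolicy dcb ∧ Γ.BestRespondsCb c dcb ∧
    ∀ dcb', IsCbPolicy dcb' →
      Γ.UFcb dcb' (Γ.mucbRE c) (Γ.fcbRE c) ≤ Γ.UFcb dcb (Γ.mucbRE c) (Γ.fcbRE c)

/-- A `k_cb`-controlled equilibrium when data is color-blind. -/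
def IsCbControlledEq (K : Set (((j : Fin N) → Xs j) → ℝ)) (c : GrpI → ℝ)
    (dcb : ((j : Fin N) → Xs j) → ℝ) : Prop :=
  dcb ∈ K ∧ Γ.BestRespondsCb c dcb ∧
    ∀ dcb' ∈ K,
      Γ.UFcb dcb' (Γ.mucbRE c) (Γ.fcbRE c) ≤ Γ.UFcb dcb (Γ.mucbRE c) (Γ.fcbRE c)

end Game

/-- A control when data is color-blind: for each `X` and each
`(μ_cb, f_cb) ∈ Δ°(X) × (0,1)^X` it specifies a nonempty compact set of
color-blind decision policies. -/
structure CbControl : Type 1 where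
  sets : ∀ (N : ℕ) (Xs : Fin N → Type) [∀ j, Fintype (Xs j)] [∀ j, Nonempty (Xs j)],
    (((j : Fin N) → Xs j) → ℝ) → (((j : Fin N) → Xs j) → ℝ) →
      Set (((j : Fin N) → Xs j) → ℝ)
  nonempty : ∀ (N : ℕ) (Xs : Fin N → Type) [∀ j, Fintype (Xs j)]
    [∀ j, Nonempty (Xs j)] (μ f : ((j : Fin N) → Xs j) → ℝ),
    (∀ x, 0 < μ x) → (∑ x, μ x = 1) → (∀ x, f x ∈ Set.Ioo (0 : ℝ) 1) →
    (sets N Xs μ f).Nonempty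
  compact : ∀ (N : ℕ) (Xs : Fin N → Type) [∀ j, Fintype (Xs j)]
    [∀ j, Nonempty (Xs j)] (μ f : ((j : Fin N) → Xs j) → ℝ),
    (∀ x, 0 < μ x) → (∑ x, μ x = 1) → (∀ x, f x ∈ Set.Ioo (0 : ℝ) 1) →
    IsCompact (sets N Xs μ f)
  mem_policy : ∀ (N : ℕ) (Xs : Fin N → Type) [∀ j, Fintype (Xs j)]
    [∀ j, Nonempty (Xs j)] (μ f : ((j : Fin N) → Xs j) → ℝ),
    (∀ x, 0 < μ x) → (∑ x, μ x = 1) → (∀ x, f x ∈ Set.Ioo (0 : ℝ) 1) →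
    sets N Xs μ f ⊆ {dcb | IsCbPolicy dcb}

/-!
The constrained problem is a fractional knapsack. Writing `M x = μ f` for the qualified mass
and `W x = μ (f v_q - (1 - f) v_u)` for the payoff of `x`, shifting qualified mass from `x` to `x'`
keeps the constraint and changes the objective by a positive multiple of
`W x' / M x' - W x / M x`. So a maximizer never has `d̂ x > 0` and `d̂ x' < 1` when `x'` has the
larger ratio, and the ratio `v_q - v_u (1 - f) / f` is strictly increasing in `f`, hence in `l`.
-/

section LinearProgram

variable {α : Type*} [Fintype α]

lemma sum_add_ite_sub_ite_mul [DecidableEq α] (d A : α → ℝ) (x x' : α) (a b : ℝ) :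
    ∑ z, (d z + (if z = x' then a else 0) - (if z = x then b else 0)) * A z =
      ∑ z, d z * A z + a * A x' - b * A x := by
  simp only [add_mul, sub_mul, Finset.sum_add_distrib, Finset.sum_sub_distrib, ite_mul,
    zero_mul, Finset.sum_ite_eq', Finset.mem_univ, if_true]

lemma eq_zero_or_eq_one_of_maximizer_of_div_lt {M W d : α → ℝ} (hM : ∀ x, 0 < M x)
    (hd : ∀ x, d x ∈ Set.Icc (0 : ℝ) 1)
    (hmax : ∀ d' : α → ℝ, (∀ x, d' x ∈ Set.Icc (0 : ℝ) 1) →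
      ∑ x, d' x * M x = ∑ x, d x * M x → ∑ x, d' x * W x ≤ ∑ x, d x * W x)
    {x x' : α} (hlt : W x / M x < W x' / M x') : d x = 0 ∨ d x' = 1 := by
  classical
  by_contra! hne
  have hx : 0 < d x := lt_of_le_of_ne (hd x).1 (Ne.symm hne.1)
  have hx' : d x' < 1 := lt_of_le_of_ne (hd x').2 hne.2
  have hxx' : x ≠ x' := by rintro rfl; exact lt_irrefl _ hlt
  have hgain : W x * M x' < W x' * M x := by
    rwa [div_lt_div_iff₀ (hM x) (hM x')] at hlt
  -- move `τ M x'` out of `x` and `τ M x` into `x'`: the mass `∑ d M` is unchanged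
  set τ := min (d x / M x') ((1 - d x') / M x)
  have hτ : 0 < τ := lt_min (div_pos hx (hM x')) (div_pos (by linarith) (hM x))
  have hτx : τ * M x' ≤ d x := (le_div_iff₀ (hM x')).mp (min_le_left _ _)
  have hτx' : τ * M x ≤ 1 - d x' := (le_div_iff₀ (hM x)).mp (min_le_right _ _)
  set d' : α → ℝ := fun z =>
    d z + (if z = x' then τ * M x else 0) - (if z = x then τ * M x' else 0)
  have hd' : ∀ z, d' z ∈ Set.Icc (0 : ℝ) 1 := by
    intro z
    have hxM := hM x
    have hx'M := hM x'
    obtain ⟨hz0, hz1⟩ := hd z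
    by_cases hzx : z = x
    · subst hzx
      simp only [d', hxx', if_false, if_true]
      constructor <;> nlinarith
    by_cases hzx' : z = x'
    · subst hzx'
      simp only [d', hzx, if_false, if_true]
      constructor <;> nlinarith
    · simp only [d', hzx, hzx', if_false]
      constructor <;> linarith
  have hmass : ∑ z, d' z * M z = ∑ z, d z * M z := by
    rw [sum_add_ite_sub_ite_mul]; ring
  have hobj : ∑ z, d' z * W z = ∑ z, d z * W z + τ * (W x' * M x - W x * M x') := by
    rw [sum_add_ite_sub_ite_mul]; ring
  have hprofit := mul_pos hτ (sub_pos.mpr hgain)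
  linarith [hmax d' hd' hmass]

lemma exists_threshold_of_eq_zero_or_eq_one {β : Type*} [LinearOrder β] [Nonempty α]
    (s : α → β) (d : α → ℝ) (h : ∀ x x', s x < s x' → d x = 0 ∨ d x' = 1) :
    ∃ lm ∈ Set.range s, ∀ x, (s x < lm → d x = 0) ∧ (lm < s x → d x = 1) := by
  classical
  by_cases hsupp : (Finset.univ.filter fun z => d z ≠ 0).Nonempty
  · obtain ⟨z, hz, hmin⟩ := Finset.exists_min_image _ s hsupp
    have hz0 : d z ≠ 0 := (Finset.mem_filter.mp hz).2
    refine ⟨s z, ⟨z, rfl⟩, fun x => ⟨fun hlt => ?_, fun hlt => (h z x hlt).resolve_left hz0⟩⟩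
    by_contra hx0
    exact (hmin x (Finset.mem_filter.mpr ⟨Finset.mem_univ x, hx0⟩)).not_gt hlt
  · obtain ⟨z, -, hmax⟩ := Finset.exists_max_image Finset.univ s Finset.univ_nonempty
    refine ⟨s z, ⟨z, rfl⟩, fun x => ⟨fun _ => ?_, fun hlt => ?_⟩⟩
    · by_contra hx0
      exact hsupp ⟨x, Finset.mem_filter.mpr ⟨Finset.mem_univ x, hx0⟩⟩
    · exact absurd (hmax x (Finset.mem_univ x)) hlt.not_ge

end LinearProgram

namespace Game

variable {N : ℕ} {Xs : Fin N → Type} [∀ j, Fintype (Xs j)] [∀ j, Nonempty (Xs j)]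
variable (Γ : Game N Xs)

lemma setIntegral_g_pos {s : Set ℝ} (hs : 0 < MeasureTheory.volume s) :
    0 < ∫ t in s, Γ.g t := by
  rw [MeasureTheory.setIntegral_pos_iff_support_of_nonneg_ae
    (Filter.Eventually.of_forall fun t => (Γ.g_pos t).le) Γ.g_int.integrableOn]
  have hsupp : Function.support Γ.g = Set.univ :=
    Set.eq_univ_of_forall fun t => Function.mem_support.mpr (Γ.g_pos t).ne'
  rwa [hsupp, Set.univ_inter]

lemma G_pos (cc : ℝ) : 0 < Γ.G cc :=
  Γ.setIntegral_g_pos (by simp [Real.volume_Iic])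

lemma G_lt_one (cc : ℝ) : Γ.G cc < 1 := by
  have hsplit := MeasureTheory.integral_add_compl (measurableSet_Iic (a := cc)) Γ.g_int
  have htail := Γ.setIntegral_g_pos (s := (Set.Iic cc)ᶜ) (by simp [Real.volume_Ioi])
  rw [Γ.g_norm] at hsplit
  rw [G]
  linarith

lemma lam_pos (i : GrpI) : 0 < Γ.lam i := by
  cases i
  · exact Γ.lamw_pos
  · exact sub_pos.mpr Γ.lamw_lt_one

lemma p_pos (i : GrpI) (x : (j : Fin N) → Xs j) (y : Cls) : 0 < Γ.p i x y :=
  mul_pos (Γ.pY_pos _ _) (Γ.pC_pos _ _)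

lemma lhd_pos (x : (j : Fin N) → Xs j) : 0 < Γ.lhd x :=
  div_pos (Γ.pY_pos _ _) (Γ.pY_pos _ _)

variable (c : GrpI → ℝ) (i : GrpI) (x : (j : Fin N) → Xs j)

lemma muRE_pos : 0 < Γ.muRE c i x :=
  mul_pos (Γ.lam_pos i) (add_pos (mul_pos (Γ.G_pos _) (Γ.p_pos i x _))
    (mul_pos (sub_pos.mpr (Γ.G_lt_one _)) (Γ.p_pos i x _)))

lemma fRE_pos : 0 < Γ.fRE c i x :=
  div_pos (mul_pos (Γ.G_pos _) (Γ.p_pos i x _)) (add_pos (mul_pos (Γ.G_pos _) (Γ.p_pos i x _))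
    (mul_pos (sub_pos.mpr (Γ.G_lt_one _)) (Γ.p_pos i x _)))

lemma inv_fRE_sub_one :
    (Γ.fRE c i x)⁻¹ - 1 = (1 - Γ.G (c i)) / Γ.G (c i) * (Γ.lhd x)⁻¹ := by
  have hG := (Γ.G_pos (c i)).ne'
  have hq := (Γ.pY_pos (Γ.proj x) Cls.q).ne'
  have hu := (Γ.pY_pos (Γ.proj x) Cls.u).ne'
  have hC := (Γ.pC_pos i x).ne'
  simp only [fRE, lhd, p, inv_div]
  field_simp
  ring

/-- The ratio is `v_q - v_u (1 - f) / f`, which increases with `f`. -/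
lemma payoff_ratio_lt_of_lhd_lt {x x' : (j : Fin N) → Xs j}
    (hl : Γ.lhd x < Γ.lhd x') :
    Γ.muRE c i x * (Γ.fRE c i x * Γ.vq - (1 - Γ.fRE c i x) * Γ.vu) /
        (Γ.muRE c i x * Γ.fRE c i x) <
      Γ.muRE c i x' * (Γ.fRE c i x' * Γ.vq - (1 - Γ.fRE c i x') * Γ.vu) /
        (Γ.muRE c i x' * Γ.fRE c i x') := by
  have hratio : ∀ z, Γ.muRE c i z * (Γ.fRE c i z * Γ.vq - (1 - Γ.fRE c i z) * Γ.vu) /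
      (Γ.muRE c i z * Γ.fRE c i z) = Γ.vq - Γ.vu * ((Γ.fRE c i z)⁻¹ - 1) := by
    intro z
    have hμ := (Γ.muRE_pos c i z).ne'
    have hf := (Γ.fRE_pos c i z).ne'
    field_simp
  have hodds : (1 - Γ.G (c i)) / Γ.G (c i) * (Γ.lhd x')⁻¹ <
      (1 - Γ.G (c i)) / Γ.G (c i) * (Γ.lhd x)⁻¹ :=
    mul_lt_mul_of_pos_left ((inv_lt_inv₀ (Γ.lhd_pos x') (Γ.lhd_pos x)).mpr hl)
      (div_pos (sub_pos.mpr (Γ.G_lt_one _)) (Γ.G_pos _))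
  rw [hratio, hratio, inv_fRE_sub_one, inv_fRE_sub_one]
  linarith [mul_lt_mul_of_pos_left hodds Γ.vu_pos]

end Game

theorem constrained_firm_problem_threshold_general
    {N : ℕ} {Xs : Fin N → Type} [∀ j, Fintype (Xs j)] [∀ j, Nonempty (Xs j)]
    (Γ : Game N Xs) (i : GrpI) (c : GrpI → ℝ) (t : ℝ)
    (dh : ((j : Fin N) → Xs j) → ℝ)
    (hfeas : (∀ x, dh x ∈ Set.Icc (0 : ℝ) 1) ∧
      ∑ x, dh x * Γ.muRE c i x * Γ.fRE c i x =
        t * ∑ x, Γ.muRE c i x * Γ.fRE c i x)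
    (hmax : ∀ d' : ((j : Fin N) → Xs j) → ℝ,
      (∀ x, d' x ∈ Set.Icc (0 : ℝ) 1) →
      (∑ x, d' x * Γ.muRE c i x * Γ.fRE c i x =
        t * ∑ x, Γ.muRE c i x * Γ.fRE c i x) →
      ∑ x, d' x * Γ.muRE c i x *
          (Γ.fRE c i x * Γ.vq - (1 - Γ.fRE c i x) * Γ.vu) ≤
        ∑ x, dh x * Γ.muRE c i x *
          (Γ.fRE c i x * Γ.vq - (1 - Γ.fRE c i x) * Γ.vu)) :
    ∃ lm ∈ Γ.LVset, ∀ x,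
      (Γ.lhd x < lm → dh x = 0) ∧ (lm < Γ.lhd x → dh x = 1) := by
  obtain ⟨hdh, hmass⟩ := hfeas
  simp only [mul_assoc] at hmass hmax
  exact exists_threshold_of_eq_zero_or_eq_one Γ.lhd dh fun x x' hl =>
    eq_zero_or_eq_one_of_maximizer_of_div_lt
      (fun z => mul_pos (Γ.muRE_pos c i z) (Γ.fRE_pos c i z)) hdh
      (fun d' hd' hmass' => hmax d' hd' (hmass' ▸ hmass))
      (Γ.payoff_ratio_lt_of_lhd_lt c i hl)

/-- **Threshold characterization of the constrained firm problem.** Every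
maximizer of the firm's within-group objective over `[0,1]^X` subject to a
fixed true positive rate `t` has threshold form in the likelihood: there is a
likelihood value `l_m` with `d̂_x = 0` below it and `d̂_x = 1` above it. -/
theorem constrained_firm_problem_threshold
    {N : ℕ} {Xs : Fin N → Type} [∀ j, Fintype (Xs j)] [∀ j, Nonempty (Xs j)]
    (Γ : Game N Xs) (i : GrpI) (c : GrpI → ℝ) (t : ℝ)
    (ht : t ∈ Set.Icc (0 : ℝ) 1)
    (dh : ((j : Fin N) → Xs j) → ℝ)
    (hfeas : (∀ x, dh x ∈ Set.Icc (0 : ℝ) 1) ∧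
      ∑ x, dh x * Γ.muRE c i x * Γ.fRE c i x =
        t * ∑ x, Γ.muRE c i x * Γ.fRE c i x)
    (hmax : ∀ d' : ((j : Fin N) → Xs j) → ℝ,
      (∀ x, d' x ∈ Set.Icc (0 : ℝ) 1) →
      (∑ x, d' x * Γ.muRE c i x * Γ.fRE c i x =
        t * ∑ x, Γ.muRE c i x * Γ.fRE c i x) →
      ∑ x, d' x * Γ.muRE c i x *
          (Γ.fRE c i x * Γ.vq - (1 - Γ.fRE c i x) * Γ.vu) ≤
        ∑ x, dh x * Γ.muRE c i x *
          (Γ.fRE c i x * Γ.vq - (1 - Γ.fRE c i x) * Γ.vu)) :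
    ∃ lm ∈ Γ.LVset, ∀ x,
      (Γ.lhd x < lm → dh x = 0) ∧ (lm < Γ.lhd x → dh x = 1) :=
  constrained_firm_problem_threshold_general Γ i c t dh hfeas hmax
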